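/- arXiv:2008.01603 — 4 statements merged into one kernel-verified Lean document; each statement's English description precedes it below -/
import Mathlib

section
/- Let ψ₁ : H₁ → G and ψ₂ : H₂ → G be Frattini covers of finite groups (i.e. surjections such that any subgroup of the source mapping onto G is the whole source). If H is a subgroup of the fiber product H₁ ×_G H₂ that surjects onto G and is minimal among such subgroups, then both projection maps H → H₁ and H → H₂ are surjective. -/
namespace Subgroup

variable {G N P : Type*} [Group G] [Group N] [Group P]

theorem map_eq_map_of_le_eqLocus {f g : G →* N} {K : Subgroup G} (hK : K ≤ f.eqLocus g) :
    K.map f = K.map g :=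
  SetLike.coe_injective <| by
    simpa only [coe_map] using Set.EqOn.image_eq fun _ hx => hK hx

theorem map_eq_top_of_map_comp_eq_top {ψ : N →* P} (hψ : ∀ L : Subgroup N, L.map ψ = ⊤ → L = ⊤)
    {φ : G →* N} {K : Subgroup G} (hK : K.map (ψ.comp φ) = ⊤) : K.map φ = ⊤ :=
  hψ _ (by rwa [map_map])

end Subgroup

theorem frattini_fiber_product_projections_surjective_general
    {H₁ H₂ G : Type*} [Group H₁] [Group H₂] [Group G]
    (ψ₁ : H₁ →* G) (ψ₂ : H₂ →* G)
    (hfrat₁ : ∀ K : Subgroup H₁, Subgroup.map ψ₁ K = ⊤ → K = ⊤)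
    (hfrat₂ : ∀ K : Subgroup H₂, Subgroup.map ψ₂ K = ⊤ → K = ⊤)
    (H : Subgroup (H₁ × H₂))
    (hHfiber : H ≤ MonoidHom.eqLocus (ψ₁.comp (MonoidHom.fst H₁ H₂))
      (ψ₂.comp (MonoidHom.snd H₁ H₂)))
    (hHsurj : Subgroup.map (ψ₁.comp (MonoidHom.fst H₁ H₂)) H = ⊤) :
    Subgroup.map (MonoidHom.fst H₁ H₂) H = ⊤ ∧
      Subgroup.map (MonoidHom.snd H₁ H₂) H = ⊤ := by
  have hHsurj₂ : H.map (ψ₂.comp (MonoidHom.snd H₁ H₂)) = ⊤ :=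
    (Subgroup.map_eq_map_of_le_eqLocus hHfiber).symm.trans hHsurj
  exact ⟨Subgroup.map_eq_top_of_map_comp_eq_top hfrat₁ hHsurj,
    Subgroup.map_eq_top_of_map_comp_eq_top hfrat₂ hHsurj₂⟩

/-- If `ψ₁ : H₁ → G`, `ψ₂ : H₂ → G` are Frattini covers of finite groups and
`H` is minimal among subgroups of the fiber product `H₁ ×_G H₂` surjecting onto `G`,
then both projections of `H` are surjective. -/
theorem frattini_fiber_product_projections_surjective
    {H₁ H₂ G : Type*} [Group H₁] [Group H₂] [Group G]
    [Finite H₁] [Finite H₂] [Finite G]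
    (ψ₁ : H₁ →* G) (ψ₂ : H₂ →* G)
    (hsurj₁ : Function.Surjective ψ₁) (hsurj₂ : Function.Surjective ψ₂)
    (hfrat₁ : ∀ K : Subgroup H₁, Subgroup.map ψ₁ K = ⊤ → K = ⊤)
    (hfrat₂ : ∀ K : Subgroup H₂, Subgroup.map ψ₂ K = ⊤ → K = ⊤)
    (H : Subgroup (H₁ × H₂))
    (hHfiber : H ≤ MonoidHom.eqLocus (ψ₁.comp (MonoidHom.fst H₁ H₂))
      (ψ₂.comp (MonoidHom.snd H₁ H₂)))
    (hHsurj : Subgroup.map (ψ₁.comp (MonoidHom.fst H₁ H₂)) H = ⊤)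
    (hHmin : ∀ K : Subgroup (H₁ × H₂),
      K ≤ MonoidHom.eqLocus (ψ₁.comp (MonoidHom.fst H₁ H₂)) (ψ₂.comp (MonoidHom.snd H₁ H₂)) →
      Subgroup.map (ψ₁.comp (MonoidHom.fst H₁ H₂)) K = ⊤ → K ≤ H → K = H) :
    Subgroup.map (MonoidHom.fst H₁ H₂) H = ⊤ ∧
      Subgroup.map (MonoidHom.snd H₁ H₂) H = ⊤ :=
  frattini_fiber_product_projections_surjective_general ψ₁ ψ₂ hfrat₁ hfrat₂ H hHfiber hHsurj
end

section
/- The natural reduction map SL₂(Z/9) → SL₂(Z/3) is not a Frattini cover: there exists a proper subgroup of SL₂(Z/9) that maps surjectively onto SL₂(Z/3). -/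
/-!
The unit group of the Hurwitz quaternions is the binary tetrahedral group `2T ≅ SL₂(𝔽₃)` of
order 24. The quaternion algebra `(-1, -1)` splits over `ℤ/9` (take `i ↦ !![0, 1; -1, 0]` and
`j ↦ !![1, 4; 4, -1]`; note `1 + 4² ≡ -1`), and `2` is invertible there, so the 24 Hurwitz units
become 24 matrices of determinant one (the reduced norm). They form a subgroup of `SL₂(ℤ/9)`
which reduction mod 3 maps onto `SL₂(ℤ/3)`; the subgroup misses the transvection
`!![1, 3; 0, 1]` of the kernel, so it is proper.
-/

open Matrix

def Submonoid.toSubgroupOfFinite {G : Type*} [Group G] [Finite G] (M : Submonoid G) :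
    Subgroup G where
  toSubmonoid := M
  inv_mem' {x} hx := by
    have hx' : x⁻¹ ∈ Subgroup.closure (M : Set G) := inv_mem (Subgroup.subset_closure hx)
    rwa [← Subgroup.mem_toSubmonoid, Subgroup.closure_toSubmonoid_of_finite,
      Submonoid.closure_eq] at hx'

abbrev modThree : ZMod 9 →+* ZMod 3 := ZMod.castHom (by norm_num : (3 : ℕ) ∣ 9) (ZMod 3)

def quatI : Matrix (Fin 2) (Fin 2) (ZMod 9) := !![0, 1; -1, 0]

def quatJ : Matrix (Fin 2) (Fin 2) (ZMod 9) := !![1, 4; 4, -1]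

def hurwitzUnits : List (Matrix (Fin 2) (Fin 2) (ZMod 9)) :=
  ([1, quatI, quatJ, quatI * quatJ].flatMap fun u => [u, -u]) ++
    (do
      let a ← [1, -1]; let b ← [1, -1]; let c ← [1, -1]; let d ← [1, -1]
      -- `5 = 1/2` in `ℤ/9`
      pure ((5 : ZMod 9) • (a • 1 + b • quatI + c • quatJ + d • (quatI * quatJ))))

lemma hurwitzUnits_forall_mul_mem :
    hurwitzUnits.Forall fun x => hurwitzUnits.Forall fun y => x * y ∈ hurwitzUnits := by
  decide +kernel

lemma hurwitzUnits_forall_det_eq_one :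
    hurwitzUnits.Forall fun x => x 0 0 * x 1 1 - x 0 1 * x 1 0 = 1 := by
  decide +kernel

lemma mem_map_hurwitzUnits_of_det_eq_one :
    ∀ a b c d : ZMod 3, a * d - b * c = 1 →
      !![a, b; c, d] ∈ hurwitzUnits.map (Matrix.map · modThree) := by
  decide +kernel

def hurwitzSubmonoid : Submonoid (Matrix (Fin 2) (Fin 2) (ZMod 9)) where
  carrier := {x | x ∈ hurwitzUnits}
  one_mem' := by decide
  mul_mem' {x y} hx hy :=
    List.forall_iff_forall_mem.mp
      (List.forall_iff_forall_mem.mp hurwitzUnits_forall_mul_mem x hx) y hy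

def binaryTetrahedral : Subgroup (SpecialLinearGroup (Fin 2) (ZMod 9)) :=
  (hurwitzSubmonoid.comap SpecialLinearGroup.coeMonoidHom).toSubgroupOfFinite

lemma binaryTetrahedral_ne_top : binaryTetrahedral ≠ ⊤ := by
  intro h
  let t : SpecialLinearGroup (Fin 2) (ZMod 9) := ⟨!![1, 3; 0, 1], by decide⟩
  have ht : t ∈ binaryTetrahedral := h ▸ Subgroup.mem_top t
  exact (by decide : !![1, 3; 0, 1] ∉ hurwitzUnits) ht

lemma map_binaryTetrahedral_eq_top :
    binaryTetrahedral.map (SpecialLinearGroup.map modThree) = ⊤ := by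
  refine (Subgroup.eq_top_iff' _).mpr fun h => ?_
  have hdet : h 0 0 * h 1 1 - h 0 1 * h 1 0 = 1 := by
    rw [← det_fin_two]
    exact h.2
  obtain ⟨x, hx, hxh⟩ := List.mem_map.mp (mem_map_hurwitzUnits_of_det_eq_one _ _ _ _ hdet)
  have hxdet : x.det = 1 := by
    rw [det_fin_two]
    exact List.forall_iff_forall_mem.mp hurwitzUnits_forall_det_eq_one x hx
  let g : SpecialLinearGroup (Fin 2) (ZMod 9) := ⟨x, hxdet⟩
  refine ⟨g, hx, Subtype.ext ?_⟩
  rw [SpecialLinearGroup.map_apply_coe, RingHom.mapMatrix_apply, hxh]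
  exact (eta_fin_two _).symm

/-- The reduction map `SL₂(ℤ/9) → SL₂(ℤ/3)` is not a Frattini cover: some
proper subgroup of `SL₂(ℤ/9)` maps onto `SL₂(ℤ/3)`. -/
theorem SL2_nine_to_three_not_frattini :
    ∃ K : Subgroup (Matrix.SpecialLinearGroup (Fin 2) (ZMod 9)),
      K ≠ ⊤ ∧
      Subgroup.map
        (Matrix.SpecialLinearGroup.map (ZMod.castHom (by norm_num : (3:ℕ) ∣ 9) (ZMod 3))) K
        = ⊤ :=
  ⟨binaryTetrahedral, binaryTetrahedral_ne_top, map_binaryTetrahedral_eq_top⟩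
end

section
/- For every prime ℓ > 3 and every k ≥ 0, the reduction map SL₂(Z/ℓ^{k+1}) → SL₂(Z/ℓ) is a Frattini cover: any subgroup of SL₂(Z/ℓ^{k+1}) that maps surjectively onto SL₂(Z/ℓ) is all of SL₂(Z/ℓ^{k+1}). -/
/-!
Let `Γ(ℓ^e)` be the kernel of reduction mod `ℓ^e`. Descending from `Γ(ℓ^N) = 1`, where
`ℓ^N = 0`, it suffices to show that `Γ(ℓ^(i+2)) ≤ K` forces `Γ(ℓ^(i+1)) ≤ K`, i.e. that
`K ∩ Γ(ℓ^(i+1))` maps onto the matrices `A` with `1 + ℓ^(i+1) A` in `SL₂`, which modulo `ℓ` are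
the trace-zero matrices. These are sums of square-zero matrices `M`; lifting `1 + M` to
`x ∈ K`, the binomial theorem gives `x ^ ℓ^(i+1) ≡ 1 + ℓ^(i+1) M (mod ℓ^(i+2))`. For `i = 0`
this needs `ℓ ≥ 5`: the top binomial term `(M + ℓB)^ℓ` is divisible by `ℓ²` only because
`ℓ ≥ 4` (for `ℓ = 3` the word `M B M` survives).
-/

open Finset Pointwise

section Binomial

variable {R A : Type*} [CommRing R] [Ring A] [Algebra R A]

theorem exists_one_add_pow_prime_eq {p : ℕ} (hp : p.Prime) (hp3 : 3 < p) {s : ℕ} (hs : 1 ≤ s)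
    {Y W : A} (hY : Y ^ 2 = (p : R) ^ s • W) :
    ∃ Z : A, (1 + Y) ^ p = 1 + (p : R) • Y + (p : R) ^ (s + 1) • Z := by
  set I : Submodule R A := (p : R) ^ (s + 1) • ⊤
  have hY_pow : ∀ m, Y ^ (m + 2) = (p : R) ^ s • (Y ^ m * W) := fun m => by
    rw [pow_add, hY, mul_smul_comm]
  have hterm : ∀ m ∈ range (p - 1), Y ^ (m + 2) * ((p.choose (m + 2) : ℕ) : A) ∈ I := by
    intro m hm
    rw [mem_range] at hm
    rw [← Nat.cast_comm, ← nsmul_eq_mul]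
    rcases lt_or_eq_of_le (show m + 2 ≤ p by omega) with hlt | heq
    · obtain ⟨q, hq⟩ := hp.dvd_choose_self (by omega) hlt
      have : (p * q) • Y ^ (m + 2) = q • ((p : R) ^ (s + 1) • (Y ^ m * W)) := by
        rw [hY_pow]; module
      rw [hq, this]
      exact nsmul_mem (Submodule.smul_mem_pointwise_smul _ _ _ Submodule.mem_top) _
    · -- `p ≥ 4`, so `Y ^ p` contains two factors `Y ^ 2`
      rw [heq, Nat.choose_self, one_smul]
      obtain ⟨n, rfl⟩ : ∃ n, p = n + 4 := ⟨p - 4, by omega⟩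
      rw [pow_add, show 4 = 2 * 2 from rfl, pow_mul, hY, smul_pow, mul_smul_comm, ← pow_mul,
        show s * 2 = (s + 1) + (s - 1) by omega, pow_add, mul_smul]
      exact Submodule.smul_mem_pointwise_smul _ _ _ Submodule.mem_top
  obtain ⟨Z, -, hZ⟩ := (Submodule.mem_smul_pointwise_iff_exists _ _ _).mp (I.sum_mem hterm)
  refine ⟨Z, ?_⟩
  rw [add_comm 1 Y, (Commute.one_right Y).add_pow, show p + 1 = p - 1 + 1 + 1 by omega,
    sum_range_succ', sum_range_succ']
  simp only [one_pow, mul_one, ← hZ]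
  rw [zero_add, pow_one, pow_zero, Nat.choose_one_right, Nat.choose_zero_right, Nat.cast_one,
    one_mul, ← Nat.cast_comm, ← nsmul_eq_mul, ← Nat.cast_smul_eq_nsmul R]
  abel

theorem exists_one_add_pow_prime_pow_eq {p : ℕ} (hp : p.Prime) (hp3 : 3 < p) {M : A}
    (hM : M * M = 0) (B : A) (j : ℕ) :
    ∃ E : A, (1 + M + (p : R) • B) ^ p ^ (j + 1)
      = 1 + (p : R) ^ (j + 1) • M + (p : R) ^ (j + 2) • E := by
  induction j with
  | zero =>
    have hY : (M + (p : R) • B) ^ 2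
        = (p : R) ^ 1 • (M * B + B * M + (p : R) • (B * B)) := by
      simp only [sq, add_mul, mul_add, hM, smul_mul_assoc, mul_smul_comm]
      module
    obtain ⟨Z, hZ⟩ := exists_one_add_pow_prime_eq hp hp3 le_rfl hY
    refine ⟨B + Z, ?_⟩
    rw [zero_add, pow_one, add_assoc, hZ]
    module
  | succ j ih =>
    obtain ⟨E, hE⟩ := ih
    have hY : ((p : R) ^ (j + 1) • (M + (p : R) • E)) ^ 2
        = (p : R) ^ (2 * j + 2) • (M + (p : R) • E) ^ 2 := by
      rw [smul_pow, ← pow_mul]; ring_nf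
    obtain ⟨Z, hZ⟩ := exists_one_add_pow_prime_eq hp hp3 (by omega) hY
    refine ⟨E + (p : R) ^ j • Z, ?_⟩
    have hfactor : (p : R) ^ (j + 1) • M + (p : R) ^ (j + 2) • E
        = (p : R) ^ (j + 1) • (M + (p : R) • E) := by module
    rw [pow_succ, pow_mul, hE, add_assoc, hfactor, hZ]
    module

end Binomial

theorem ZMod.natCast_dvd_of_castHom_eq_zero {m n : ℕ} (h : m ∣ n) {x : ZMod n}
    (hx : ZMod.castHom h (ZMod m) x = 0) : (m : ZMod n) ∣ x := by
  obtain ⟨z, rfl⟩ := ZMod.intCast_surjective x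
  rw [map_intCast, ZMod.intCast_zmod_eq_zero_iff_dvd] at hx
  obtain ⟨c, rfl⟩ := hx
  exact ⟨c, by push_cast; rfl⟩

theorem Matrix.exists_eq_add_smul_of_map_eq {m n R S : Type*} [CommRing R] [Ring S]
    {f : R →+* S} {π : R} (hf : ∀ x, f x = 0 → π ∣ x) {M M' : Matrix m n R}
    (h : M.map f = M'.map f) : ∃ B, M = M' + π • B := by
  have hdvd : ∀ i j, π ∣ M i j - M' i j := fun i j =>
    hf _ (by rw [map_sub, sub_eq_zero]; exact congrFun (congrFun h i) j)
  choose B hB using hdvd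
  exact ⟨of B, by ext i j; simp [← hB]⟩

namespace Matrix.SpecialLinearGroup

section Congruence

variable {n : Type*} [Fintype n] [DecidableEq n] {R : Type*} [CommRing R]

def principalCongr (π : R) (e : ℕ) : Subgroup (SpecialLinearGroup n R) where
  carrier := {g | ∃ A, (g : Matrix n n R) = 1 + π ^ e • A}
  one_mem' := ⟨0, by simp⟩
  mul_mem' := by
    rintro g h ⟨A, hA⟩ ⟨B, hB⟩
    refine ⟨A + B + π ^ e • (A * B), ?_⟩
    rw [coe_mul, hA, hB]
    simp only [mul_add, add_mul, one_mul, mul_one, smul_mul_assoc, mul_smul_comm]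
    module
  inv_mem' := by
    rintro g ⟨A, hA⟩
    refine ⟨-((g⁻¹ : SpecialLinearGroup n R) * A), ?_⟩
    have hinv : (g⁻¹ : SpecialLinearGroup n R) * (g : Matrix n n R) = 1 := by
      rw [← coe_mul, inv_mul_cancel, coe_one]
    rw [hA, mul_add, mul_one, mul_smul_comm] at hinv
    rw [smul_neg, ← sub_eq_add_neg, eq_sub_iff_add_eq, hinv]

theorem mem_of_coe_eq_add_smul {K : Subgroup (SpecialLinearGroup n R)} {π : R} {e : ℕ}
    (hΓ : principalCongr π e ≤ K) {g h : SpecialLinearGroup n R} (hg : g ∈ K)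
    {D : Matrix n n R} (hgh : (h : Matrix n n R) = g + π ^ e • D) : h ∈ K := by
  have hquot : g⁻¹ * h ∈ K := hΓ ⟨(g⁻¹ : SpecialLinearGroup n R) * D, by
    rw [coe_mul, hgh, mul_add, ← coe_mul, inv_mul_cancel, coe_one, mul_smul_comm]⟩
  simpa using K.mul_mem hg hquot

/-- `K` maps onto `SL(n, R ⧸ π)`, phrased without forming the quotient ring. -/
def SurjectsModulo (K : Subgroup (SpecialLinearGroup n R)) (π : R) : Prop :=
  ∀ s : SpecialLinearGroup n R, ∃ m ∈ K, ∃ B, (s : Matrix n n R) = m + π • B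

/-- The image of `K ⊓ principalCongr π (i + 1)` in
`principalCongr π (i + 1) / principalCongr π (i + 2)`, read as matrices modulo `π`. -/
def levelImage (K : Subgroup (SpecialLinearGroup n R)) (π : R) (i : ℕ) :
    AddSubmonoid (Matrix n n R) where
  carrier := {A | ∃ g ∈ K, ∃ E, (g : Matrix n n R) = 1 + π ^ (i + 1) • A + π ^ (i + 2) • E}
  zero_mem' := ⟨1, K.one_mem, 0, by simp⟩
  add_mem' := by
    rintro A B ⟨g, hg, E, hgE⟩ ⟨h, hh, F, hhF⟩
    refine ⟨g * h, K.mul_mem hg hh,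
      E + F + π ^ i • (A * B) + π ^ (i + 1) • (A * F + E * B) + π ^ (i + 2) • (E * F), ?_⟩
    rw [coe_mul, hgE, hhF]
    simp only [mul_add, add_mul, one_mul, mul_one, smul_mul_assoc, mul_smul_comm, smul_smul,
      smul_add]
    module

theorem mem_of_mem_levelImage {K : Subgroup (SpecialLinearGroup n R)} {π : R} {i : ℕ}
    (hΓ : principalCongr π (i + 2) ≤ K) {A : Matrix n n R} (hA : A ∈ levelImage K π i)
    {g : SpecialLinearGroup n R} {E : Matrix n n R}
    (hg : (g : Matrix n n R) = 1 + π ^ (i + 1) • A + π ^ (i + 2) • E) : g ∈ K := by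
  obtain ⟨h, hh, F, hhF⟩ := hA
  exact mem_of_coe_eq_add_smul hΓ hh (D := E - F) (by rw [hg, hhF, smul_sub]; abel)

theorem mem_levelImage_of_mul_self_eq_zero {ℓ : ℕ} (hℓ : ℓ.Prime) (hℓ3 : 3 < ℓ)
    {K : Subgroup (SpecialLinearGroup n R)} (hK : SurjectsModulo K ℓ)
    {M : Matrix n n R} (hM : M * M = 0) (hdet : (1 + M).det = 1) (i : ℕ) :
    M ∈ levelImage K ℓ i := by
  obtain ⟨x, hxK, B, hx⟩ := hK (⟨1 + M, hdet⟩ : SpecialLinearGroup n R)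
  obtain ⟨E, hE⟩ := exists_one_add_pow_prime_pow_eq (R := R) hℓ hℓ3 hM (-B) i
  refine ⟨x ^ ℓ ^ (i + 1), K.pow_mem hxK _, E, ?_⟩
  have hx' : (x : Matrix n n R) = 1 + M + (ℓ : R) • -B := by
    rw [smul_neg, ← sub_eq_add_neg, eq_sub_iff_add_eq, ← hx]
  rw [coe_pow, hx', hE]

end Congruence

section SL2

variable {R : Type*} [CommRing R] {ℓ : ℕ} {K : Subgroup (SpecialLinearGroup (Fin 2) R)}

theorem mem_levelImage_of_trace_det_eq_zero (hℓ : ℓ.Prime) (hℓ3 : 3 < ℓ) (hK : SurjectsModulo K ℓ)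
    {x y z w : R} (htr : x + w = 0) (hdet : x * w - y * z = 0) (i : ℕ) :
    !![x, y; z, w] ∈ levelImage K ℓ i := by
  refine mem_levelImage_of_mul_self_eq_zero hℓ hℓ3 hK ?_ ?_ i
  · have hcayley : !![x, y; z, w] * !![x, y; z, w]
        = (x + w) • !![x, y; z, w] - (x * w - y * z) • (1 : Matrix (Fin 2) (Fin 2) R) := by
      ext a b
      fin_cases a <;> fin_cases b <;> simp <;> ring
    rw [hcayley, htr, hdet, zero_smul, zero_smul, sub_zero]
  · simp only [one_fin_two, of_add_of, add_cons, head_cons, tail_cons, zero_add,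
      empty_add_empty, det_fin_two_of]
    linear_combination htr + hdet

theorem principalCongr_le_of_succ_le (hℓ : ℓ.Prime) (hℓ3 : 3 < ℓ) (hK : SurjectsModulo K ℓ)
    {i : ℕ} (hΓ : principalCongr (ℓ : R) (i + 2) ≤ K) :
    principalCongr (ℓ : R) (i + 1) ≤ K := by
  rintro g ⟨A, hA⟩
  obtain ⟨r, hr⟩ : ∃ r, (ℓ : R) ^ (i + 1) * (A 0 0 + A 1 1) = (ℓ : R) ^ (i + 2) * r := by
    have hdet := g.2
    rw [hA, det_fin_two] at hdet
    simp only [one_fin_two, add_apply, of_apply, cons_val', cons_val_zero, cons_val_one,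
      cons_val_fin_one, smul_apply, smul_eq_mul, zero_add] at hdet
    exact ⟨(ℓ : R) ^ i * (A 0 1 * A 1 0 - A 0 0 * A 1 1), by linear_combination hdet⟩
  -- modulo `ℓ` the trace of `A` vanishes, so `A` is a sum of three square-zero matrices
  have hsum : !![0, A 0 1 - 1; 0, 0] + !![0, 0; A 1 0 + A 0 0 * A 0 0, 0]
      + !![A 0 0, 1; -(A 0 0 * A 0 0), -A 0 0] ∈ levelImage K ℓ i :=
    add_mem (add_mem (mem_levelImage_of_trace_det_eq_zero hℓ hℓ3 hK (by ring) (by ring) i)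
      (mem_levelImage_of_trace_det_eq_zero hℓ hℓ3 hK (by ring) (by ring) i))
      (mem_levelImage_of_trace_det_eq_zero hℓ hℓ3 hK (by ring) (by ring) i)
  refine mem_of_mem_levelImage hΓ hsum (E := !![0, 0; 0, r]) ?_
  rw [hA]
  ext a b
  fin_cases a <;> fin_cases b <;> simp
  linear_combination hr

theorem eq_top_of_surjectsModulo (hℓ : ℓ.Prime) (hℓ3 : 3 < ℓ)
    (hnil : IsNilpotent (ℓ : R)) (hK : SurjectsModulo K ℓ) : K = ⊤ := by
  obtain ⟨N, hN⟩ := hnil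
  have htop : principalCongr (ℓ : R) (N + 1) ≤ K := by
    rintro g ⟨A, hA⟩
    rw [pow_succ, hN, zero_mul, zero_smul, add_zero, ← coe_one] at hA
    exact (Subtype.ext hA : g = 1) ▸ K.one_mem
  have hΓ : principalCongr (ℓ : R) 1 ≤ K :=
    Nat.decreasingInduction (motive := fun m _ => principalCongr (ℓ : R) (m + 1) ≤ K)
      (fun _ _ => principalCongr_le_of_succ_le hℓ hℓ3 hK) htop (Nat.zero_le N)
  refine eq_top_iff.mpr fun s _ => ?_
  obtain ⟨m, hm, B, hs⟩ := hK s
  exact mem_of_coe_eq_add_smul hΓ hm (by rw [hs, pow_one])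

end SL2

end Matrix.SpecialLinearGroup

/-- For a prime `ℓ > 3` and any `k ≥ 0`, the reduction map
`SL₂(ℤ/ℓ^(k+1)) → SL₂(ℤ/ℓ)` is a Frattini cover. -/
theorem SL2_mod_ell_power_frattini
    (ℓ : ℕ) (hℓ : ℓ.Prime) (hℓ3 : 3 < ℓ) (k : ℕ)
    (K : Subgroup (Matrix.SpecialLinearGroup (Fin 2) (ZMod (ℓ ^ (k + 1)))))
    (hK : Subgroup.map
      (Matrix.SpecialLinearGroup.map
        (ZMod.castHom (dvd_pow_self ℓ (Nat.succ_ne_zero k)) (ZMod ℓ))) K = ⊤) :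
    K = ⊤ := by
  have hnil : IsNilpotent (ℓ : ZMod (ℓ ^ (k + 1))) :=
    ⟨k + 1, by rw [← Nat.cast_pow, ZMod.natCast_self]⟩
  refine Matrix.SpecialLinearGroup.eq_top_of_surjectsModulo hℓ hℓ3 hnil fun s => ?_
  obtain ⟨m, hm, hms⟩ :=
    Subgroup.mem_map.mp (hK ▸ Subgroup.mem_top (Matrix.SpecialLinearGroup.map _ s))
  exact ⟨m, hm, Matrix.exists_eq_add_smul_of_map_eq
    (fun _ => ZMod.natCast_dvd_of_castHom_eq_zero _) (congrArg Subtype.val hms).symm⟩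
end

section
/- Let G be a finite group acting on A = (Z/ℓ^{k+1})^t for a prime ℓ, inducing an action on A' = (Z/ℓ)^t via reduction. Then the natural surjection A ⋊ G → A' ⋊ G is a Frattini cover if and only if every subgroup H of A ⋊ G mapping onto A' ⋊ G contains A; in particular the surjection (Z/ℓ²)^t ⋊ G → (Z/ℓ)^t ⋊ G induced by Z/ℓ² → Z/ℓ is a Frattini cover whenever (|G|, ℓ) = 1. -/
/-- Componentwise reduction `(ℤ/ℓ^(k+1))^t → (ℤ/ℓ)^t`, written multiplicatively. -/
def redHom (ℓ k t : ℕ) :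
    Multiplicative (Fin t → ZMod (ℓ ^ (k + 1))) →* Multiplicative (Fin t → ZMod ℓ) :=
  AddMonoidHom.toMultiplicative
    (((ZMod.castHom (dvd_pow_self ℓ (Nat.succ_ne_zero k)) (ZMod ℓ)).toAddMonoidHom).compLeft
      (Fin t))

/-!
If `K ≤ A ⋊ G` maps onto `A' ⋊ G`, then `S = K ∩ A` maps onto `A' = A / ℓA`, i.e.
`A = S + ℓA`. Substituting this into itself gives `A = S + ℓ^j A` for every `j`, and
`ℓ^(k+1) A = 0` forces `S = A`: a Nakayama argument for the nilpotent ideal `(ℓ)`. So `K`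
contains `A`, hence the kernel of the cover, and a subgroup that contains the kernel and maps
onto the target is everything.
-/

theorem Subgroup.eq_top_of_map_eq_top_of_ker_le {G G' : Type*} [Group G] [Group G']
    {f : G →* G'} {H : Subgroup G} (hH : H.map f = ⊤) (hker : f.ker ≤ H) : H = ⊤ := by
  rw [← sup_eq_left.2 hker, ← comap_map_eq, hH, comap_top]

theorem Subgroup.eq_top_of_sup_range_pow_eq_top {A : Type*} [CommGroup A] {H : Subgroup A}
    {n m : ℕ} (hexp : ∀ a : A, a ^ n ^ m = 1) (hH : H ⊔ (powMonoidHom n).range = ⊤) :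
    H = ⊤ := by
  have approx : ∀ j, ∀ a : A, ∃ h ∈ H, ∃ b : A, h * b ^ n ^ j = a := by
    intro j
    induction j with
    | zero => exact fun a ↦ ⟨1, H.one_mem, a, by simp⟩
    | succ j ih =>
      intro a
      obtain ⟨h, hh, b, rfl⟩ := ih a
      obtain ⟨h', hh', _, ⟨c, rfl⟩, rfl⟩ := mem_sup.1 (hH ▸ mem_top b)
      refine ⟨h * h' ^ n ^ j, H.mul_mem hh (H.pow_mem hh' _), c, ?_⟩
      simp only [powMonoidHom_apply, mul_pow, ← pow_mul, pow_succ']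
      group
  refine eq_top_iff.2 fun a _ ↦ ?_
  obtain ⟨h, hh, b, rfl⟩ := approx m a
  simpa [hexp b] using hh

namespace SemidirectProduct

variable {N N' G : Type*} [Group N] [Group N'] [Group G] {φ : G →* MulAut N}
  {φ' : G →* MulAut N'} {f : N →* N'}

theorem ker_map_le_range_inl (hf : ∀ g, f.comp (φ g).toMonoidHom = (φ' g).toMonoidHom.comp f) :
    (map f (MonoidHom.id G) hf).ker ≤ (inl : N →* N ⋊[φ] G).range := by
  intro x hx
  rw [range_inl_eq_ker_rightHom, MonoidHom.mem_ker]
  simpa using congrArg rightHom hx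

theorem map_comap_inl_eq_top (hf : ∀ g, f.comp (φ g).toMonoidHom = (φ' g).toMonoidHom.comp f)
    {K : Subgroup (N ⋊[φ] G)} (hK : K.map (map f (MonoidHom.id G) hf) = ⊤) :
    (K.comap inl).map f = ⊤ := by
  refine eq_top_iff.2 fun n' _ ↦ ?_
  obtain ⟨x, hxK, hx⟩ := hK ▸ Subgroup.mem_top (inl n' : N' ⋊[φ'] G)
  have hx_inl : x ∈ (inl : N →* N ⋊[φ] G).range := by
    rw [range_inl_eq_ker_rightHom, MonoidHom.mem_ker]
    simpa using congrArg rightHom hx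
  obtain ⟨n, rfl⟩ := hx_inl
  exact ⟨n, hxK, by simpa using hx⟩

end SemidirectProduct

theorem ZMod.exists_eq_mul_of_cast_eq_zero {m n : ℕ} (hmn : m ∣ n) {x : ZMod n}
    (hx : (x.cast : ZMod m) = 0) : ∃ y : ZMod n, x = m * y := by
  rw [← ZMod.intCast_zmod_cast x, ZMod.cast_intCast hmn, ZMod.intCast_zmod_eq_zero_iff_dvd] at hx
  obtain ⟨q, hq⟩ := hx
  exact ⟨q, by rw [← ZMod.intCast_zmod_cast x, hq]; push_cast; rfl⟩

theorem ZMod.pi_pow_eq_one {ι : Type*} (n : ℕ) (a : Multiplicative (ι → ZMod n)) :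
    a ^ n = 1 := by
  ext i
  simp [nsmul_eq_mul]

theorem ker_redHom_le_range_pow (ℓ k t : ℕ) :
    (redHom ℓ k t).ker ≤ (powMonoidHom ℓ).range := by
  intro x hx
  have hcoord i : ((Multiplicative.toAdd x i).cast : ZMod ℓ) = 0 :=
    congrFun (congrArg Multiplicative.toAdd hx) i
  choose y hy using fun i ↦
    ZMod.exists_eq_mul_of_cast_eq_zero (dvd_pow_self ℓ k.succ_ne_zero) (hcoord i)
  refine ⟨Multiplicative.ofAdd y, ?_⟩
  ext i
  simp [hy, nsmul_eq_mul]

theorem range_inl_le_of_map_redHom_eq_top {ℓ t k : ℕ} {G : Type*} [Group G]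
    {φ : G →* MulAut (Multiplicative (Fin t → ZMod (ℓ ^ (k + 1))))}
    {φ' : G →* MulAut (Multiplicative (Fin t → ZMod ℓ))}
    (hcompat : ∀ g : G,
      (redHom ℓ k t).comp (φ g).toMonoidHom = (φ' g).toMonoidHom.comp (redHom ℓ k t))
    {K : Subgroup (Multiplicative (Fin t → ZMod (ℓ ^ (k + 1))) ⋊[φ] G)}
    (hK : K.map (SemidirectProduct.map (redHom ℓ k t) (MonoidHom.id G) hcompat) = ⊤) :
    (SemidirectProduct.inl : _ →* _ ⋊[φ] G).range ≤ K := by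
  set S := K.comap SemidirectProduct.inl
  have hS_sup_ker : S ⊔ (redHom ℓ k t).ker = ⊤ := by
    rw [← Subgroup.comap_map_eq, SemidirectProduct.map_comap_inl_eq_top hcompat hK,
      Subgroup.comap_top]
  have hS : S = ⊤ :=
    Subgroup.eq_top_of_sup_range_pow_eq_top (ZMod.pi_pow_eq_one _)
      (top_unique (hS_sup_ker ▸ sup_le_sup_left (ker_redHom_le_range_pow ℓ k t) S))
  rw [MonoidHom.range_eq_map, Subgroup.map_le_iff_le_comap]
  exact hS.ge

theorem semidirect_product_frattini_cover_general
    (ℓ : ℕ) (t k : ℕ)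
    {G : Type*} [Group G]
    (φ : G →* MulAut (Multiplicative (Fin t → ZMod (ℓ ^ (k + 1)))))
    (φ' : G →* MulAut (Multiplicative (Fin t → ZMod ℓ)))
    (hcompat : ∀ g : G,
      (redHom ℓ k t).comp (φ g).toMonoidHom = (φ' g).toMonoidHom.comp (redHom ℓ k t)) :
    let Ψ : (Multiplicative (Fin t → ZMod (ℓ ^ (k + 1))) ⋊[φ] G) →*
        (Multiplicative (Fin t → ZMod ℓ) ⋊[φ'] G) :=
      SemidirectProduct.map (redHom ℓ k t) (MonoidHom.id G) (fun g => hcompat g)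
    ((∀ K : Subgroup (Multiplicative (Fin t → ZMod (ℓ ^ (k + 1))) ⋊[φ] G),
        Subgroup.map Ψ K = ⊤ → K = ⊤) ↔
      (∀ K : Subgroup (Multiplicative (Fin t → ZMod (ℓ ^ (k + 1))) ⋊[φ] G),
        Subgroup.map Ψ K = ⊤ →
          (SemidirectProduct.inl :
            Multiplicative (Fin t → ZMod (ℓ ^ (k + 1))) →*
              Multiplicative (Fin t → ZMod (ℓ ^ (k + 1))) ⋊[φ] G).range ≤ K)) ∧
    (k = 1 → (Nat.card G).Coprime ℓ →
      ∀ K : Subgroup (Multiplicative (Fin t → ZMod (ℓ ^ (k + 1))) ⋊[φ] G),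
        Subgroup.map Ψ K = ⊤ → K = ⊤) := by
  intro Ψ
  have hcontains : ∀ K : Subgroup _, K.map Ψ = ⊤ →
      (SemidirectProduct.inl : _ →* _ ⋊[φ] G).range ≤ K :=
    fun K hK ↦ range_inl_le_of_map_redHom_eq_top hcompat hK
  have hfrattini : ∀ K : Subgroup _, K.map Ψ = ⊤ → K = ⊤ := fun K hK ↦
    Subgroup.eq_top_of_map_eq_top_of_ker_le hK
      ((SemidirectProduct.ker_map_le_range_inl hcompat).trans (hcontains K hK))
  exact ⟨iff_of_true hfrattini hcontains, fun _ _ ↦ hfrattini⟩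

/-- Let a finite group `G` act on `A = (ℤ/ℓ^(k+1))^t`, inducing (via the
componentwise reduction `redHom`) an action on `A' = (ℤ/ℓ)^t`.  Then the natural
surjection `A ⋊ G → A' ⋊ G` is a Frattini cover iff every subgroup of `A ⋊ G` mapping
onto `A' ⋊ G` contains `A`; and in particular, for `k = 1` (the case
`(ℤ/ℓ²)^t ⋊ G → (ℤ/ℓ)^t ⋊ G` induced by `ℤ/ℓ² → ℤ/ℓ`), it is a Frattini cover whenever
`(|G|, ℓ) = 1`. -/
theorem semidirect_product_frattini_cover
    (ℓ : ℕ) (hℓ : ℓ.Prime) (t k : ℕ)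
    {G : Type*} [Group G] [Finite G]
    (φ : G →* MulAut (Multiplicative (Fin t → ZMod (ℓ ^ (k + 1)))))
    (φ' : G →* MulAut (Multiplicative (Fin t → ZMod ℓ)))
    (hcompat : ∀ g : G,
      (redHom ℓ k t).comp (φ g).toMonoidHom = (φ' g).toMonoidHom.comp (redHom ℓ k t)) :
    let Ψ : (Multiplicative (Fin t → ZMod (ℓ ^ (k + 1))) ⋊[φ] G) →*
        (Multiplicative (Fin t → ZMod ℓ) ⋊[φ'] G) :=
      SemidirectProduct.map (redHom ℓ k t) (MonoidHom.id G) (fun g => hcompat g)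
    ((∀ K : Subgroup (Multiplicative (Fin t → ZMod (ℓ ^ (k + 1))) ⋊[φ] G),
        Subgroup.map Ψ K = ⊤ → K = ⊤) ↔
      (∀ K : Subgroup (Multiplicative (Fin t → ZMod (ℓ ^ (k + 1))) ⋊[φ] G),
        Subgroup.map Ψ K = ⊤ →
          (SemidirectProduct.inl :
            Multiplicative (Fin t → ZMod (ℓ ^ (k + 1))) →*
              Multiplicative (Fin t → ZMod (ℓ ^ (k + 1))) ⋊[φ] G).range ≤ K)) ∧
    (k = 1 → (Nat.card G).Coprime ℓ →
      ∀ K : Subgroup (Multiplicative (Fin t → ZMod (ℓ ^ (k + 1))) ⋊[φ] G),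
        Subgroup.map Ψ K = ⊤ → K = ⊤) :=
  semidirect_product_frattini_cover_general ℓ t k φ φ' hcompat
end
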